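/- arXiv:math/9606217 — 3 statements merged into one kernel-verified Lean document; each statement's English description precedes it below -/
import Mathlib

section
/- Let n be an odd positive integer and ε a primitive n-th root of unity in ℂ. Then there are no integers γ₁, γ₂, γ₃, μ with γ₁, γ₂, γ₃ all not divisible by n such that ε^γ₁ + ε^γ₂ + ε^γ₃ = ε^μ + 2. -/
open Finset Polynomial

/-- Sum of Möbius over divisors. -/
lemma aux_sum_moebius (j : ℕ) :
    ∑ d ∈ j.divisors, ArithmeticFunction.moebius d = if j = 1 then 1 else 0 := by
  calc ∑ d ∈ j.divisors, ArithmeticFunction.moebius d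
      = (ArithmeticFunction.moebius * (ArithmeticFunction.zeta : ArithmeticFunction ℕ)) j :=
        ArithmeticFunction.coe_mul_zeta_apply.symm
    _ = (1 : ArithmeticFunction ℤ) j := by
        rw [ArithmeticFunction.moebius_mul_coe_zeta]
    _ = if j = 1 then 1 else 0 := ArithmeticFunction.one_apply

/-- Ramanujan sum c_m(1) = μ(m), as a sum over units of `ZMod m`. -/
lemma aux_sum_units_primitive {m : ℕ} [NeZero m] {η : ℂ} (hη : IsPrimitiveRoot η m) :
    ∑ v : (ZMod m)ˣ, η ^ (v : ZMod m).val = ((ArithmeticFunction.moebius m : ℤ) : ℂ) := by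
  classical
  have hm : m ≠ 0 := NeZero.ne m
  -- convert to a sum over coprime residues
  have h1 : ∑ v : (ZMod m)ˣ, η ^ (v : ZMod m).val
      = ∑ x ∈ (Finset.range m).filter (fun x => Nat.Coprime m x), η ^ x := by
    apply Finset.sum_bij (fun (v : (ZMod m)ˣ) _ => (v : ZMod m).val)
    · intro v _
      simp only [Finset.mem_filter, Finset.mem_range]
      exact ⟨ZMod.val_lt _, (ZMod.val_coe_unit_coprime v).symm⟩
    · intro a _ b _ h
      apply Units.ext
      have := congrArg (fun y : ℕ => (y : ZMod m)) h
      simpa [ZMod.natCast_val, ZMod.cast_id] using this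
    · intro x hx
      simp only [Finset.mem_filter, Finset.mem_range] at hx
      refine ⟨ZMod.unitOfCoprime x hx.2.symm, Finset.mem_univ _, ?_⟩
      simp [ZMod.unitOfCoprime, ZMod.val_natCast, Nat.mod_eq_of_lt hx.1]
    · intros; rfl
  rw [h1, Finset.sum_filter]
  -- Möbius expansion of the coprimality indicator
  have h2 : ∀ x ∈ Finset.range m,
      (if Nat.Coprime m x then η ^ x else 0)
        = ∑ d ∈ m.divisors, if d ∣ x then ((ArithmeticFunction.moebius d : ℤ) : ℂ) * η ^ x else 0 := by
    intro x _
    have hg : Nat.gcd m x ≠ 0 := fun h => hm (Nat.eq_zero_of_gcd_eq_zero_left h)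
    have hdiv : (Nat.gcd m x).divisors = m.divisors.filter (· ∣ x) := by
      ext d
      simp only [Nat.mem_divisors, Finset.mem_filter, Nat.dvd_gcd_iff]
      tauto
    have hmain : ∑ d ∈ m.divisors, (if d ∣ x then ((ArithmeticFunction.moebius d : ℤ) : ℂ) * η ^ x else 0)
        = (∑ d ∈ (Nat.gcd m x).divisors, ((ArithmeticFunction.moebius d : ℤ) : ℂ)) * η ^ x := by
      rw [hdiv, Finset.sum_mul, Finset.sum_filter]
    rw [hmain]
    have hZ : (∑ d ∈ (Nat.gcd m x).divisors, ((ArithmeticFunction.moebius d : ℤ) : ℂ))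
        = ((∑ d ∈ (Nat.gcd m x).divisors, ArithmeticFunction.moebius d : ℤ) : ℂ) := by
      push_cast
      rfl
    rw [hZ, aux_sum_moebius]
    unfold Nat.Coprime
    by_cases hco : Nat.gcd m x = 1 <;> simp [hco]
  rw [Finset.sum_congr rfl h2, Finset.sum_comm]
  -- inner geometric sums
  have h3 : ∀ d ∈ m.divisors,
      ∑ x ∈ Finset.range m, (if d ∣ x then ((ArithmeticFunction.moebius d : ℤ) : ℂ) * η ^ x else 0)
        = if d = m then ((ArithmeticFunction.moebius m : ℤ) : ℂ) else 0 := by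
    intro d hd
    obtain ⟨hdm, -⟩ := Nat.mem_divisors.mp hd
    have hd0 : d ≠ 0 := by rintro rfl; exact hm (zero_dvd_iff.mp hdm)
    have hfact : d * (m / d) = m := Nat.mul_div_cancel' hdm
    have hdpos : 0 < d := Nat.pos_of_ne_zero hd0
    have himg : (Finset.range m).filter (fun x => d ∣ x)
        = (Finset.range (m / d)).image (fun j => d * j) := by
      ext x
      simp only [Finset.mem_filter, Finset.mem_range, Finset.mem_image]
      constructor
      · rintro ⟨hx, k, rfl⟩
        refine ⟨k, ?_, rfl⟩
        have : d * k < d * (m / d) := by rwa [hfact]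
        exact lt_of_mul_lt_mul_left this (Nat.zero_le d)
      · rintro ⟨j, hj, rfl⟩
        refine ⟨?_, ⟨j, rfl⟩⟩
        have : d * j < d * (m / d) := mul_lt_mul_of_pos_left hj hdpos
        rwa [hfact] at this
    have hsum : ∑ x ∈ Finset.range m, (if d ∣ x then ((ArithmeticFunction.moebius d : ℤ) : ℂ) * η ^ x else 0)
        = ((ArithmeticFunction.moebius d : ℤ) : ℂ) * ∑ j ∈ Finset.range (m / d), (η ^ d) ^ j := by
      rw [← Finset.sum_filter, himg,
        Finset.sum_image (fun a _ b _ h => Nat.eq_of_mul_eq_mul_left hdpos h),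
        Finset.mul_sum]
      exact Finset.sum_congr rfl fun j _ => by rw [← pow_mul]
    rw [hsum]
    by_cases hdm' : d = m
    · subst hdm'
      have : η ^ d = 1 := hη.pow_eq_one
      simp [this, Nat.div_self (Nat.pos_of_ne_zero hd0)]
    · have hne : η ^ d ≠ 1 := by
        intro h
        exact hdm' (Nat.dvd_antisymm hdm ((hη.pow_eq_one_iff_dvd d).mp h))
      have : ∑ j ∈ Finset.range (m / d), (η ^ d) ^ j = 0 := by
        rw [geom_sum_eq hne]
        rw [← pow_mul, hfact, hη.pow_eq_one]
        simp
      simp [this, hdm']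
  rw [Finset.sum_congr rfl h3, Finset.sum_ite_eq' m.divisors m
    (fun _ => ((ArithmeticFunction.moebius m : ℤ) : ℂ))]
  simp [Nat.mem_divisors_self m hm]

/-- Ramanujan sum over units of `ZMod n` for an `n`-th root of unity `η`. -/
lemma aux_sum_units_eq (n : ℕ) [NeZero n] (η : ℂ) (hη : η ^ n = 1) :
    ∃ K : ℕ, K * (orderOf η).totient = n.totient ∧
      ∑ u : (ZMod n)ˣ, η ^ (u : ZMod n).val = (K : ℂ) * ((ArithmeticFunction.moebius (orderOf η) : ℤ) : ℂ) := by
  classical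
  have hn : n ≠ 0 := NeZero.ne n
  set m := orderOf η with hmdef
  have hfin : IsOfFinOrder η :=
    isOfFinOrder_iff_pow_eq_one.mpr ⟨n, Nat.pos_of_ne_zero hn, hη⟩
  have hmpos : 0 < m := orderOf_pos_iff.mpr hfin
  haveI : NeZero m := ⟨hmpos.ne'⟩
  have hdvd : m ∣ n := orderOf_dvd_of_pow_eq_one hη
  set π := ZMod.unitsMap hdvd with hπdef
  have hπsurj : Function.Surjective π := ZMod.unitsMap_surjective hdvd
  have hred : ∀ u : (ZMod n)ˣ, η ^ (u : ZMod n).val = η ^ ((π u : ZMod m)).val := by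
    intro u
    have h1 : ((π u : ZMod m)) = (((u : ZMod n).val : ℕ) : ZMod m) := by
      rw [hπdef]
      simp only [ZMod.unitsMap_def, Units.coe_map, MonoidHom.coe_coe, ZMod.castHom_apply]
      rw [← ZMod.natCast_val]
    rw [h1, ZMod.val_natCast, hmdef, pow_mod_orderOf]
  set K := (Finset.univ.filter (fun u : (ZMod n)ˣ => π u = 1)).card with hKdef
  have hfiber : ∀ v : (ZMod m)ˣ,
      (Finset.univ.filter (fun u : (ZMod n)ˣ => π u = v)).card = K := by
    intro v
    obtain ⟨u₀, hu₀⟩ := hπsurj v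
    rw [hKdef]
    apply Finset.card_bij (fun (u : (ZMod n)ˣ) _ => u₀⁻¹ * u)
    · intro u hu
      simp only [Finset.mem_filter, Finset.mem_univ, true_and] at hu ⊢
      rw [map_mul, map_inv, hu, hu₀, inv_mul_cancel]
    · intro a _ b _ h
      exact mul_left_cancel h
    · intro u hu
      simp only [Finset.mem_filter, Finset.mem_univ, true_and] at hu
      refine ⟨u₀ * u, ?_, by rw [inv_mul_cancel_left]⟩
      simp only [Finset.mem_filter, Finset.mem_univ, true_and, map_mul, hu, hu₀, mul_one]
  refine ⟨K, ?_, ?_⟩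
  · have hcard : (Finset.univ : Finset (ZMod n)ˣ).card
        = ∑ v : (ZMod m)ˣ, (Finset.univ.filter (fun u : (ZMod n)ˣ => π u = v)).card :=
      Finset.card_eq_sum_card_fiberwise (fun u _ => Finset.mem_univ (π u))
    have htot : n.totient = m.totient * K := by
      rw [← ZMod.card_units_eq_totient n, ← Finset.card_univ, hcard]
      simp only [hfiber, Finset.sum_const, smul_eq_mul]
      rw [Finset.card_univ, ZMod.card_units_eq_totient]
    rw [htot, Nat.mul_comm]
  · have hsplit : ∑ u : (ZMod n)ˣ, η ^ (u : ZMod n).val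
        = ∑ v : (ZMod m)ˣ, ∑ u ∈ Finset.univ.filter (fun u : (ZMod n)ˣ => π u = v),
            η ^ ((π u : ZMod m)).val := by
      rw [Finset.sum_fiberwise_of_maps_to (fun u _ => Finset.mem_univ (π u))]
      exact Finset.sum_congr rfl (fun u _ => hred u)
    rw [hsplit]
    have : ∀ v : (ZMod m)ˣ,
        ∑ u ∈ Finset.univ.filter (fun u : (ZMod n)ˣ => π u = v),
          η ^ ((π u : ZMod m)).val = (K : ℂ) * η ^ (v : ZMod m).val := by
      intro v
      rw [Finset.sum_congr rfl (fun u hu => by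
        rw [(Finset.mem_filter.mp hu).2]), Finset.sum_const, hfiber v, nsmul_eq_mul]
    rw [Finset.sum_congr rfl (fun v _ => this v), ← Finset.mul_sum,
      aux_sum_units_primitive (IsPrimitiveRoot.orderOf η)]

/-- Galois conjugation of the hypothesis equation. -/
lemma aux_galois {n : ℕ} (hpos : 0 < n) {ε : ℂ} (hε : IsPrimitiveRoot ε n)
    {γ₁ γ₂ γ₃ δ : ℤ} (heq : ε ^ γ₁ + ε ^ γ₂ + ε ^ γ₃ = ε ^ δ + 2)
    {k : ℕ} (hk : Nat.Coprime k n) :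
    (ε ^ (k : ℤ)) ^ γ₁ + (ε ^ (k : ℤ)) ^ γ₂ + (ε ^ (k : ℤ)) ^ γ₃
      = (ε ^ (k : ℤ)) ^ δ + 2 := by
  have hn0 : n ≠ 0 := hpos.ne'
  have hε0 : ε ≠ 0 := hε.ne_zero hn0
  -- reduce integer exponents to naturals mod n
  have zred : ∀ (ζ : ℂ), ζ ≠ 0 → ζ ^ n = 1 → ∀ γ : ℤ, ζ ^ γ = ζ ^ (γ % n).toNat := by
    intro ζ hζ0 hζn γ
    have hmod : ζ ^ γ = ζ ^ (γ % n) := by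
      conv_lhs => rw [← Int.mul_ediv_add_emod γ n]
      rw [zpow_add₀ hζ0, zpow_mul]
      rw [show ζ ^ (n : ℤ) = 1 by rw [zpow_natCast, hζn]]
      simp
    rw [hmod, ← zpow_natCast, Int.toNat_of_nonneg (Int.emod_nonneg γ (by exact_mod_cast hn0))]
  set a₁ := (γ₁ % n).toNat
  set a₂ := (γ₂ % n).toNat
  set a₃ := (γ₃ % n).toNat
  set b := (δ % n).toNat
  set P : Polynomial ℚ := X ^ a₁ + X ^ a₂ + X ^ a₃ - X ^ b - C 2 with hPdef
  have hev : ∀ ζ : ℂ, Polynomial.aeval ζ P = ζ ^ a₁ + ζ ^ a₂ + ζ ^ a₃ - ζ ^ b - 2 := by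
    intro ζ; simp [hPdef]
  have hεn : ε ^ n = 1 := hε.pow_eq_one
  have hroot : Polynomial.aeval ε P = 0 := by
    rw [hev]
    have e1 := zred ε hε0 hεn γ₁
    have e2 := zred ε hε0 hεn γ₂
    have e3 := zred ε hε0 hεn γ₃
    have e4 := zred ε hε0 hεn δ
    rw [← e1, ← e2, ← e3, ← e4]
    rw [sub_sub, sub_eq_zero, heq]
  have hdvdP : minpoly ℚ ε ∣ P := minpoly.dvd ℚ ε hroot
  rw [← Polynomial.cyclotomic_eq_minpoly_rat hε hpos] at hdvdP
  obtain ⟨Q, hQ⟩ := hdvdP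
  have hprim : IsPrimitiveRoot (ε ^ k) n := hε.pow_of_coprime k hk
  have hζ0 : (ε ^ (k : ℤ)) ≠ 0 := zpow_ne_zero _ hε0
  have hζn : (ε ^ (k : ℤ)) ^ n = 1 := by
    rw [zpow_natCast, ← pow_mul, mul_comm, pow_mul, hεn, one_pow]
  have hrootk : Polynomial.aeval (ε ^ (k : ℤ)) P = 0 := by
    rw [hQ, map_mul]
    have : Polynomial.aeval (ε ^ (k : ℤ)) (Polynomial.cyclotomic n ℚ) = 0 := by
      rw [Polynomial.aeval_def, ← Polynomial.eval_map, Polynomial.map_cyclotomic]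
      rw [zpow_natCast]
      exact hprim.isRoot_cyclotomic hpos
    rw [this, zero_mul]
  rw [hev] at hrootk
  have e1 := zred _ hζ0 hζn γ₁
  have e2 := zred _ hζ0 hζn γ₂
  have e3 := zred _ hζ0 hζn γ₃
  have e4 := zred _ hζ0 hζn δ
  rw [e1, e2, e3, e4]
  rw [sub_sub, sub_eq_zero] at hrootk
  linear_combination hrootk

set_option maxHeartbeats 1000000

theorem stmt_0 (n : ℕ) (hpos : 0 < n) (hodd : Odd n) (ε : ℂ)
    (hε : IsPrimitiveRoot ε n) :
    ¬ ∃ γ₁ γ₂ γ₃ μ : ℤ, ¬ (n : ℤ) ∣ γ₁ ∧ ¬ (n : ℤ) ∣ γ₂ ∧ ¬ (n : ℤ) ∣ γ₃ ∧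
      ε ^ γ₁ + ε ^ γ₂ + ε ^ γ₃ = ε ^ μ + 2 := by
  classical
  rintro ⟨γ₁, γ₂, γ₃, δ, h1, h2, h3, heq⟩
  have hn0 : n ≠ 0 := hpos.ne'
  haveI : NeZero n := ⟨hn0⟩
  have hε0 : ε ≠ 0 := hε.ne_zero hn0
  have hεn : ε ^ n = 1 := hε.pow_eq_one
  -- the Ramanujan sums
  set S : ℤ → ℂ := fun γ => ∑ u : (ZMod n)ˣ, ε ^ (((u : ZMod n).val : ℤ) * γ) with hSdef
  have hsum : S γ₁ + S γ₂ + S γ₃ = S δ + (n.totient : ℂ) * 2 := by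
    rw [hSdef]
    simp only []
    rw [← Finset.sum_add_distrib, ← Finset.sum_add_distrib]
    have : ∀ u : (ZMod n)ˣ,
        ε ^ (((u : ZMod n).val : ℤ) * γ₁) + ε ^ (((u : ZMod n).val : ℤ) * γ₂)
          + ε ^ (((u : ZMod n).val : ℤ) * γ₃)
        = ε ^ (((u : ZMod n).val : ℤ) * δ) + 2 := by
      intro u
      have hk : Nat.Coprime ((u : ZMod n).val) n := ZMod.val_coe_unit_coprime u
      have := aux_galois hpos hε heq hk
      simpa [← zpow_mul] using this
    rw [Finset.sum_congr rfl (fun u _ => this u), Finset.sum_add_distrib]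
    congr 1
    rw [Finset.sum_const, Finset.card_univ, ZMod.card_units_eq_totient, nsmul_eq_mul]
  -- evaluate each Ramanujan sum
  have main : ∀ γ : ℤ, ∃ (K m : ℕ), (¬ (n : ℤ) ∣ γ → m ≠ 1) ∧ m ∣ n
      ∧ K * m.totient = n.totient ∧ S γ = (K : ℂ) * ((ArithmeticFunction.moebius m : ℤ) : ℂ) := by
    intro γ
    have hηn : (ε ^ γ) ^ n = 1 := by
      rw [← zpow_natCast, ← zpow_mul, mul_comm, zpow_mul, zpow_natCast, hεn, one_zpow]
    obtain ⟨K, hK, hSval⟩ := aux_sum_units_eq n (ε ^ γ) hηn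
    refine ⟨K, orderOf (ε ^ γ), ?_, orderOf_dvd_of_pow_eq_one hηn, hK, ?_⟩
    · intro hnd hone
      have : ε ^ γ = 1 := orderOf_eq_one_iff.mp hone
      exact hnd ((hε.zpow_eq_one_iff_dvd γ).mp this)
    · rw [hSdef]
      simp only []
      rw [← hSval]
      apply Finset.sum_congr rfl
      intro u _
      rw [mul_comm, zpow_mul, zpow_natCast]
  obtain ⟨K₁, m₁, hm₁, hm₁d, hK₁, hS₁⟩ := main γ₁
  obtain ⟨K₂, m₂, hm₂, hm₂d, hK₂, hS₂⟩ := main γ₂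
  obtain ⟨K₃, m₃, hm₃, hm₃d, hK₃, hS₃⟩ := main γ₃
  obtain ⟨K₄, m₄, -, hm₄d, hK₄, hS₄⟩ := main δ
  rw [hS₁, hS₂, hS₃, hS₄] at hsum
  -- transfer to ℤ
  have hZ : (K₁ : ℤ) * ArithmeticFunction.moebius m₁ + (K₂ : ℤ) * ArithmeticFunction.moebius m₂ + (K₃ : ℤ) * ArithmeticFunction.moebius m₃
      = (K₄ : ℤ) * ArithmeticFunction.moebius m₄ + (n.totient : ℤ) * 2 := by
    exact_mod_cast hsum
  -- bounds
  have hφpos : 0 < (n.totient : ℤ) := by exact_mod_cast Nat.totient_pos.mpr hpos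
  have hodd_of_dvd : ∀ m : ℕ, m ∣ n → Odd m := by
    intro m hm
    rcases Nat.even_or_odd m with he | ho
    · exfalso
      have h2 : 2 ∣ n := (even_iff_two_dvd.mp he).trans hm
      rw [Nat.odd_iff] at hodd
      omega
    · exact ho
  have hbound : ∀ (K m : ℕ), m ≠ 1 → m ∣ n → K * m.totient = n.totient →
      4 * ((K : ℤ) * ArithmeticFunction.moebius m) ≤ (n.totient : ℤ) := by
    intro K m hm1 hmd hKm
    have hm0 : m ≠ 0 := by rintro rfl; exact hn0 (Nat.eq_zero_of_zero_dvd hmd)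
    rcases ArithmeticFunction.moebius_eq_or m with h | h | h
    · rw [h]; simpa using hφpos.le
    · -- ArithmeticFunction.moebius m = 1 : m is squarefree, odd, not 1, not prime ⇒ φ m ≥ 4
      have hsf : Squarefree m := by
        rw [← ArithmeticFunction.moebius_ne_zero_iff_squarefree, h]; norm_num
      have hm2 : 1 < m := by omega
      set p := m.minFac with hpdef
      have hp : p.Prime := Nat.minFac_prime (by omega)
      have hpd : p ∣ m := Nat.minFac_dvd m
      obtain ⟨r, hr⟩ := hpd
      have hrm : r ∣ m := ⟨p, by rw [hr]; ring⟩
      have hr1 : r ≠ 1 := by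
        rintro rfl
        rw [mul_one] at hr
        have : ArithmeticFunction.moebius m = -1 := by
          rw [hr]; exact ArithmeticFunction.moebius_apply_prime hp
        omega
      have hr0 : r ≠ 0 := by rintro rfl; simp [hr] at hm0
      have hcop : Nat.Coprime p r := by
        have h' : Squarefree (p * r) := hr ▸ hsf
        rcases Nat.squarefree_mul_iff.mp h' with ⟨hc, -, -⟩
        exact hc
      have hpodd : Odd p := hodd_of_dvd p (dvd_trans (⟨r, hr⟩ : p ∣ m) hmd)
      have hrodd : Odd r := hodd_of_dvd r (hrm.trans hmd)
      have hp3 : 3 ≤ p := by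
        have h2 := hp.two_le
        have hne : p ≠ 2 := by
          intro h2'
          rw [h2'] at hpodd
          exact (by decide : ¬ Odd 2) hpodd
        omega
      have hr3 : 3 ≤ r := by
        have hne : r ≠ 2 := by
          intro h2'
          rw [h2'] at hrodd
          exact (by decide : ¬ Odd 2) hrodd
        omega
      have hφr : 2 ≤ r.totient := by
        have hev : Even r.totient := Nat.totient_even (by omega)
        have hpos' : 0 < r.totient := Nat.totient_pos.mpr (by omega)
        rcases hev with ⟨t, ht⟩
        omega
      have hφm : 4 ≤ m.totient := by
        rw [hr, Nat.totient_mul hcop, Nat.totient_prime hp]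
        have h2p : 2 ≤ p - 1 := by omega
        calc 4 = 2 * 2 := by norm_num
          _ ≤ (p - 1) * r.totient := Nat.mul_le_mul h2p hφr
      rw [h, mul_one]
      have hKφ : (K : ℤ) * (m.totient : ℤ) = (n.totient : ℤ) := by exact_mod_cast hKm
      have h4 : (4 : ℤ) ≤ (m.totient : ℤ) := by exact_mod_cast hφm
      nlinarith [Int.ofNat_nonneg K]
    · rw [h]
      have : 4 * ((K : ℤ) * (-1)) ≤ 0 := by nlinarith [Int.ofNat_nonneg K]
      linarith
  have hbound4 : ∀ (K m : ℕ), m ∣ n → K * m.totient = n.totient →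
      -2 * ((K : ℤ) * ArithmeticFunction.moebius m) ≤ (n.totient : ℤ) := by
    intro K m hmd hKm
    have hm0 : m ≠ 0 := by rintro rfl; exact hn0 (Nat.eq_zero_of_zero_dvd hmd)
    have hKφ : (K : ℤ) * (m.totient : ℤ) = (n.totient : ℤ) := by exact_mod_cast hKm
    rcases ArithmeticFunction.moebius_eq_or m with h | h | h
    · rw [h]; simpa using hφpos.le
    · rw [h]
      have : -2 * ((K : ℤ) * 1) ≤ 0 := by nlinarith [Int.ofNat_nonneg K]
      linarith
    · -- ArithmeticFunction.moebius m = -1 : m ≠ 1 so m ≥ 3 (odd) so φ m ≥ 2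
      have hm1 : m ≠ 1 := by
        rintro rfl
        rw [ArithmeticFunction.moebius_apply_one] at h
        omega
      have hmodd : Odd m := hodd_of_dvd m hmd
      have hm3 : 3 ≤ m := by
        have hne : m ≠ 2 := by
          intro h2'
          rw [h2'] at hmodd
          exact (by decide : ¬ Odd 2) hmodd
        omega
      have hφm : 2 ≤ m.totient := by
        have hev : Even m.totient := Nat.totient_even (by omega)
        have hpos' : 0 < m.totient := Nat.totient_pos.mpr (by omega)
        rcases hev with ⟨t, ht⟩
        omega
      rw [h]
      have h2 : (2 : ℤ) ≤ (m.totient : ℤ) := by exact_mod_cast hφm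
      nlinarith [Int.ofNat_nonneg K]
  have b1 := hbound K₁ m₁ (hm₁ h1) hm₁d hK₁
  have b2 := hbound K₂ m₂ (hm₂ h2) hm₂d hK₂
  have b3 := hbound K₃ m₃ (hm₃ h3) hm₃d hK₃
  have b4 := hbound4 K₄ m₄ hm₄d hK₄
  linarith
end

section
/- Let K be a Galois extension of a field F with U = Gal(K/F), and let G be a subgroup of Aut(K) containing U with [G : U] = n finite. Put k = K^G, the fixed field of G. Then K is a Galois extension of k, [F : k] = n, and Gal(K/k) = G. -/
/-!
Every `x : K` has a finite `G`-orbit: its `U`-orbit lies among the roots of its minimal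
polynomial over `F`, and `G` is a finite union of cosets of `U`. The orbit polynomial of `x`
therefore has coefficients in `k = K^G` and is separable and split, so `K/k` is Galois, and
`k ≤ F` because `F` is the fixed field of `U`. In `Gal(K/k)`, the preimage of `G` is a finite
union of cosets of the closed subgroup `Gal(K/F)`, hence closed in the Krull topology; its fixed
field is `k`, so it is all of `Gal(K/k)`. Finally `[F : k] = [Gal(K/k) : Gal(K/F)] = [G : U] = n`.
-/

open Polynomial MulAction
open scoped Pointwise

theorem Subgroup.isClosed_of_isClosed_of_isFiniteRelIndex {G : Type*} [Group G]
    [TopologicalSpace G] [SeparatelyContinuousMul G] {H K : Subgroup G} [H.IsFiniteRelIndex K]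
    (hHK : H ≤ K) (hH : IsClosed (H : Set G)) : IsClosed (K : Set G) := by
  suffices (K : Set G) = ⋃ q : K ⧸ H.subgroupOf K, (q.out : G) • (H : Set G) from
    this ▸ isClosed_iUnion_of_finite fun q => hH.leftCoset _
  ext g
  refine ⟨fun hg => ?_, ?_⟩
  · obtain ⟨h, hh⟩ := QuotientGroup.mk_out_eq_mul (H.subgroupOf K) ⟨g, hg⟩
    refine Set.mem_iUnion.mpr ⟨(⟨g, hg⟩ : K), ((h⁻¹ : H.subgroupOf K) : G), (h⁻¹).2, ?_⟩
    simp [hh]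
  · simp only [Set.mem_iUnion]
    rintro ⟨q, h, hh, rfl⟩
    exact K.mul_mem q.out.2 (hHK hh)

theorem MulAction.orbit_finite_of_isFiniteRelIndex {M α : Type*} [Group M] [MulAction M α]
    {H K : Subgroup M} [H.IsFiniteRelIndex K] {x : α} (hx : (orbit H x).Finite) :
    (orbit K x).Finite := by
  refine (Set.finite_iUnion fun q : K ⧸ H.subgroupOf K =>
    hx.smul_set (a := (q.out : M))).subset ?_
  rintro _ ⟨g, rfl⟩
  obtain ⟨h, hh⟩ := QuotientGroup.mk_out_eq_mul (H.subgroupOf K) g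
  refine Set.mem_iUnion.mpr ⟨g, ((h⁻¹ : H.subgroupOf K) : K) • x, ⟨⟨_, (h⁻¹).2⟩, rfl⟩, ?_⟩
  simp [Subgroup.smul_def, hh, smul_smul]

section OrbitPolynomial

variable {M K : Type*} [Group M] [Field K] [MulSemiringAction M K]

theorem isIntegral_and_minpoly_separable_splits_of_orbit_finite {x : K}
    (hx : (orbit M x).Finite) :
    IsIntegral (FixedPoints.subfield M K) x ∧ (minpoly (FixedPoints.subfield M K) x).Separable ∧
      ((minpoly (FixedPoints.subfield M K) x).map
        (algebraMap (FixedPoints.subfield M K) K)).Splits := by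
  set k := FixedPoints.subfield M K
  have := hx.fintype
  set p : K[X] := ∏ y : orbit M x, (X - C (y : K))
  have hp_smul (g : M) : g • p = p := by
    simp only [p, Finset.smul_prod', smul_sub, smul_X, smul_C]
    exact Fintype.prod_bijective _ (MulAction.bijective g) _ _ fun y => rfl
  obtain ⟨q, hqp⟩ : ∃ q : k[X], q.map (algebraMap k K) = p :=
    (mem_lifts p).mp <| (lifts_iff_coeff_lifts p).mpr fun i =>
      ⟨⟨p.coeff i, fun g => by rw [← coeff_smul, hp_smul]⟩, rfl⟩
  have hp0 : p ≠ 0 := Finset.prod_ne_zero_iff.mpr fun y _ => X_sub_C_ne_zero (y : K)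
  have hq0 : q ≠ 0 := by rintro rfl; simp [← hqp] at hp0
  have hqx : aeval x q = 0 := by
    rw [aeval_def, ← eval_map, hqp, eval_prod]
    exact Finset.prod_eq_zero (Finset.mem_univ ⟨x, mem_orbit_self x⟩) (by simp)
  have hdvd : minpoly k x ∣ q := minpoly.dvd k x hqx
  have hq_sep : q.Separable := by
    rw [← separable_map (algebraMap k K), hqp]
    exact separable_prod_X_sub_C_iff'.mpr fun _ _ _ _ h => Subtype.ext h
  have hq_splits : (q.map (algebraMap k K)).Splits := by
    rw [hqp]
    exact Splits.prod fun y _ => Splits.X_sub_C _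
  exact ⟨IsAlgebraic.isIntegral ⟨q, hq0, hqx⟩, hq_sep.of_dvd hdvd,
    hq_splits.of_dvd (Polynomial.map_ne_zero hq0) (Polynomial.map_dvd _ hdvd)⟩

theorem isGalois_fixedPoints_of_orbit_finite (h : ∀ x : K, (orbit M x).Finite) :
    IsGalois (FixedPoints.subfield M K) K :=
  have hx := fun x => isIntegral_and_minpoly_separable_splits_of_orbit_finite (h x)
  isGalois_iff.mpr ⟨⟨fun x => (hx x).2.1⟩, normal_iff.mpr fun x => ⟨(hx x).1, (hx x).2.2⟩⟩

end OrbitPolynomial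

section RingAut

variable {K : Type*} [Field K]

theorem comap_toRingAut_fixingSubgroup (k : Subfield K) (s : Set K) :
    (fixingSubgroup (K ≃+* K) s).comap (MulSemiringAction.toRingAut (K ≃ₐ[k] K) K) =
      fixingSubgroup (K ≃ₐ[k] K) s := by
  ext σ
  simp only [Subgroup.mem_comap, mem_fixingSubgroup_iff]
  rfl

theorem range_toRingAut_algEquiv (k : Subfield K) :
    (MulSemiringAction.toRingAut (K ≃ₐ[k] K) K).range =
      fixingSubgroup (K ≃+* K) (k : Set K) := by
  ext σ
  simp only [MonoidHom.mem_range, mem_fixingSubgroup_iff]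
  refine ⟨?_, fun hσ => ⟨AlgEquiv.ofRingEquiv (f := σ) fun c => hσ c c.2, rfl⟩⟩
  rintro ⟨f, rfl⟩ x hx
  exact f.commutes ⟨x, hx⟩

theorem orbit_fixingSubgroup_finite (F : Subfield K) [Algebra.IsAlgebraic F K] (x : K) :
    (orbit (fixingSubgroup (K ≃+* K) (F : Set K)) x).Finite := by
  refine ((minpoly F x).rootSet_finite K).subset ?_
  rintro _ ⟨⟨σ, hσ⟩, rfl⟩
  rw [← range_toRingAut_algEquiv] at hσ
  obtain ⟨f, rfl⟩ := hσ
  refine mem_rootSet.mpr ⟨minpoly.ne_zero (Algebra.IsIntegral.isIntegral x), ?_⟩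
  change aeval (f x) _ = 0
  rw [aeval_algHom_apply, minpoly.aeval, map_zero]

theorem fixedPoints_subfield_fixingSubgroup (F : Subfield K) [IsGalois F K] :
    FixedPoints.subfield (fixingSubgroup (K ≃+* K) (F : Set K)) K = F := by
  ext x
  refine ⟨fun hx => ?_, fun hx σ => (mem_fixingSubgroup_iff _).mp σ.2 x hx⟩
  obtain ⟨c, rfl⟩ := (InfiniteGalois.mem_range_algebraMap_iff_fixed (k := F) x).mpr fun f => by
    have hf : MulSemiringAction.toRingAut (K ≃ₐ[F] K) K f ∈
        fixingSubgroup (K ≃+* K) (F : Set K) := by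
      rw [← range_toRingAut_algEquiv]
      exact ⟨f, rfl⟩
    exact hx ⟨_, hf⟩
  exact c.2

theorem finrank_eq_relIndex_fixingSubgroup {k F : Subfield K} [IsGalois k K] (hkF : k ≤ F) :
    letI : Algebra k F := (Subfield.inclusion hkF).toAlgebra
    Module.finrank k F =
      (fixingSubgroup (K ≃+* K) (F : Set K)).relIndex (fixingSubgroup (K ≃+* K) (k : Set K)) := by
  rw [← range_toRingAut_algEquiv k, ← Subgroup.index_comap, comap_toRingAut_fixingSubgroup]
  exact IntermediateField.finrank_eq_fixingSubgroup_index K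
    (F.toIntermediateField fun x => hkF x.2)

theorem le_fixingSubgroup_fixedPoints_subfield (G : Subgroup (K ≃+* K)) :
    G ≤ fixingSubgroup (K ≃+* K) (FixedPoints.subfield G K : Set K) :=
  fun σ hσ => (mem_fixingSubgroup_iff _).mpr fun _ hx => hx ⟨σ, hσ⟩

theorem fixingSubgroup_fixedPoints_subfield_eq (G : Subgroup (K ≃+* K))
    [IsGalois (FixedPoints.subfield G K) K] {F : Subfield K} (hkF : FixedPoints.subfield G K ≤ F)
    (hFG : fixingSubgroup (K ≃+* K) (F : Set K) ≤ G)
    [(fixingSubgroup (K ≃+* K) (F : Set K)).IsFiniteRelIndex G] :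
    fixingSubgroup (K ≃+* K) (FixedPoints.subfield G K : Set K) = G := by
  set k := FixedPoints.subfield G K
  set φ := MulSemiringAction.toRingAut (K ≃ₐ[k] K) K
  let E := F.toIntermediateField (K := k) fun x => hkF x.2
  have hGφ : G ≤ φ.range := range_toRingAut_algEquiv k ▸ le_fixingSubgroup_fixedPoints_subfield G
  have hE : E.fixingSubgroup = (fixingSubgroup (K ≃+* K) (F : Set K)).comap φ :=
    (comap_toRingAut_fixingSubgroup k _).symm
  have : E.fixingSubgroup.IsFiniteRelIndex (G.comap φ) := by
    rw [Subgroup.isFiniteRelIndex_iff_relIndex_ne_zero, hE, Subgroup.relIndex_comap,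
      Subgroup.map_comap_eq_self hGφ]
    exact Subgroup.relIndex_ne_zero
  let G' : ClosedSubgroup (K ≃ₐ[k] K) :=
    ⟨G.comap φ, Subgroup.isClosed_of_isClosed_of_isFiniteRelIndex
      (hE ▸ Subgroup.comap_mono hFG) (InfiniteGalois.fixingSubgroup_isClosed E)⟩
  have hfixed : IntermediateField.fixedField G'.1 = ⊥ := by
    refine eq_bot_iff.mpr fun x hx => IntermediateField.mem_bot.mpr ⟨⟨x, fun σ => ?_⟩, rfl⟩
    obtain ⟨f, hf⟩ := hGφ σ.2
    change (σ : K ≃+* K) x = x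
    rw [← hf]
    exact (IntermediateField.mem_fixedField_iff _ x).mp hx f (Subgroup.mem_comap.mpr (hf ▸ σ.2))
  have hG' : G.comap φ = ⊤ := by
    rw [← IntermediateField.fixingSubgroup_bot, ← hfixed,
      InfiniteGalois.fixingSubgroup_fixedField G']
  rw [← range_toRingAut_algEquiv, MonoidHom.range_eq_map, ← hG', Subgroup.map_comap_eq_self hGφ]

end RingAut

theorem stmt_7 (K : Type*) [Field K] (F : Subfield K) [IsGalois F K]
    (U G : Subgroup (K ≃+* K))
    (hU : ∀ σ : K ≃+* K, σ ∈ U ↔ ∀ x ∈ F, σ x = x)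
    (hUG : U ≤ G) (n : ℕ) (hn : 0 < n) (hidx : U.relIndex G = n)
    (k : Subfield K) (hk : ∀ x : K, x ∈ k ↔ ∀ σ ∈ G, σ x = x) :
    IsGalois k K ∧
      (∀ σ : K ≃+* K, σ ∈ G ↔ ∀ x ∈ k, σ x = x) ∧
      ∃ hkF : k ≤ F,
        letI : Algebra k F := (Subfield.inclusion hkF).toAlgebra
        Module.finrank k F = n := by
  obtain rfl : U = fixingSubgroup (K ≃+* K) (F : Set K) := by
    ext σ
    rw [hU, mem_fixingSubgroup_iff]
    rfl
  obtain rfl : k = FixedPoints.subfield G K :=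
    Subfield.ext fun x => (hk x).trans ⟨fun h σ => h σ σ.2, fun h σ hσ => h ⟨σ, hσ⟩⟩
  have : (fixingSubgroup (K ≃+* K) (F : Set K)).IsFiniteRelIndex G := ⟨by omega⟩
  have : IsGalois (FixedPoints.subfield G K) K := isGalois_fixedPoints_of_orbit_finite fun x =>
    MulAction.orbit_finite_of_isFiniteRelIndex (orbit_fixingSubgroup_finite F x)
  have hkF : FixedPoints.subfield G K ≤ F := fun x hx =>
    fixedPoints_subfield_fixingSubgroup F ▸ fun σ => hx ⟨σ, hUG σ.2⟩
  have hG := fixingSubgroup_fixedPoints_subfield_eq G hkF hUG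
  refine ⟨this, fun σ => (SetLike.ext_iff.mp hG σ).symm.trans (mem_fixingSubgroup_iff _), hkF, ?_⟩
  rw [finrank_eq_relIndex_fixingSubgroup hkF, hG, hidx]
end

section
/- Let n be even, n ≥ 4, ε a primitive n-th root of unity, h_p(z) = εz and h_q(z) = εz + (ε - 1) affine maps of ℂ. Then h_q^{l₁}∘h_p^{l₂} = h_p^{k₁}∘h_q^{k₂} with l₁, l₂, k₁, k₂ not divisible by n holds if and only if there exists l with 2l ≢ 0 (mod n) such that l₁ ≡ l, l₂ ≡ -l + n/2, k₁ ≡ l + n/2, k₂ ≡ -l (mod n). -/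
/-! Both maps have linear part `ε`, and `h_q` is the rotation `z ↦ εz` conjugated to the centre
`-1`, so `h_q^m = (z ↦ ε^m z + ε^m - 1)`. Comparing translation parts of the two composites gives
`x - 1 = y (z - 1)` for the unit complex numbers `x = ε^{l₁}`, `y = ε^{k₁}`, `z = ε^{k₂}`.
Conjugating (on the unit circle `conj = inv`) and multiplying yields `(z - x)(xz - 1) = 0`;
`z = x` is ruled out by `x, y ≠ 1`, and `z = x⁻¹` forces `y = -x = ε^{n/2} x`. The linear parts
then give the congruence for `l₂`. -/

/-- The group of affine transformations `z ↦ a z + b` of `ℂ` (with `a ≠ 0`),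
under composition. -/
@[ext]
structure Aff where
  a : ℂˣ
  b : ℂ

namespace Aff

instance : Mul Aff := ⟨fun x y => ⟨x.a * y.a, (x.a : ℂ) * y.b + x.b⟩⟩
instance : One Aff := ⟨⟨1, 0⟩⟩
instance : Inv Aff := ⟨fun x => ⟨x.a⁻¹, -(((x.a⁻¹ : ℂˣ) : ℂ) * x.b)⟩⟩

@[simp] lemma mul_a (x y : Aff) : (x * y).a = x.a * y.a := rfl
@[simp] lemma mul_b (x y : Aff) : (x * y).b = (x.a : ℂ) * y.b + x.b := rfl
@[simp] lemma one_a : (1 : Aff).a = 1 := rfl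
@[simp] lemma one_b : (1 : Aff).b = 0 := rfl
@[simp] lemma inv_a (x : Aff) : x⁻¹.a = x.a⁻¹ := rfl
@[simp] lemma inv_b (x : Aff) : x⁻¹.b = -(((x.a⁻¹ : ℂˣ) : ℂ) * x.b) := rfl

instance : Group Aff where
  mul_assoc x y z := by
    ext
    · simp [mul_assoc]
    · simp; ring
  one_mul x := by ext <;> simp
  mul_one x := by ext <;> simp
  inv_mul_cancel x := by
    ext
    · simp
    · have h : ((x.a : ℂ)) ≠ 0 := x.a.ne_zero
      rw [mul_b, inv_b, one_b, inv_a]; ring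

/-- `Aff.apply g z = a z + b`: the action of an affine map on `ℂ`. -/
def apply (g : Aff) (z : ℂ) : ℂ := (g.a : ℂ) * z + g.b

end Aff

theorem Complex.sub_one_eq_mul_sub_one_iff {x y z : ℂ} (hx : ‖x‖ = 1) (hy : ‖y‖ = 1)
    (hz : ‖z‖ = 1) (hx1 : x ≠ 1) (hy1 : y ≠ 1) :
    x - 1 = y * (z - 1) ↔ y = -x ∧ z = x⁻¹ := by
  have hx0 : x ≠ 0 := norm_ne_zero_iff.mp (by simp [hx])
  have hx1' : x - 1 ≠ 0 := sub_ne_zero.mpr hx1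
  constructor
  · intro h
    have hconj : (1 - x) * y * z = x * (1 - z) := by
      have hy0 : y ≠ 0 := norm_ne_zero_iff.mp (by simp [hy])
      have hz0 : z ≠ 0 := norm_ne_zero_iff.mp (by simp [hz])
      have := congrArg (starRingEnd ℂ) h
      simp only [map_sub, map_mul, map_one, ← Complex.inv_eq_conj, hx, hy, hz] at this
      field_simp at this
      exact this
    have hfac : (z - x) * (x * z - 1) = 0 := by
      linear_combination (z - 1) * hconj + (1 - x) * z * h
    rcases mul_eq_zero.mp hfac with hzx | hxz
    · obtain rfl : z = x := sub_eq_zero.mp hzx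
      have hy : y * (z - 1) = 1 * (z - 1) := by linear_combination -h
      exact absurd (mul_right_cancel₀ hx1' hy) hy1
    · have hz : z = x⁻¹ := eq_inv_of_mul_eq_one_right (sub_eq_zero.mp hxz)
      subst hz
      refine ⟨mul_left_cancel₀ hx1' ?_, rfl⟩
      field_simp at h
      linear_combination h
  · rintro ⟨rfl, rfl⟩
    field_simp
    ring

namespace Aff

def dilation : ℂˣ →* Aff where
  toFun u := ⟨u, 0⟩
  map_one' := rfl
  map_mul' u v := by ext <;> simp

theorem mk_zero_zpow (u : ℂˣ) (m : ℤ) : (⟨u, 0⟩ : Aff) ^ m = ⟨u ^ m, 0⟩ :=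
  (map_zpow dilation u m).symm

theorem mk_sub_one_zpow (u : ℂˣ) (m : ℤ) :
    (⟨u, (u : ℂ) - 1⟩ : Aff) ^ m = ⟨u ^ m, ((u ^ m : ℂˣ) : ℂ) - 1⟩ := by
  have hconj : (⟨u, (u : ℂ) - 1⟩ : Aff) = ⟨1, -1⟩ * ⟨u, 0⟩ * (⟨1, -1⟩ : Aff)⁻¹ := by
    ext <;> simp [sub_eq_add_neg]
  rw [hconj, conj_zpow, mk_zero_zpow]
  ext <;> simp [sub_eq_add_neg]

end Aff

theorem IsPrimitiveRoot.zpow_eq_zpow_iff_modEq {G : Type*} [CommGroup G] {ζ : G} {n : ℕ}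
    (h : IsPrimitiveRoot ζ n) {a b : ℤ} : ζ ^ a = ζ ^ b ↔ a ≡ b [ZMOD n] :=
  h.eq_orderOf ▸ _root_.zpow_eq_zpow_iff_modEq

theorem IsPrimitiveRoot.zpow_div_two_eq_neg_one {R : Type*} [CommRing R] [IsDomain R]
    {ζ : Rˣ} {n : ℕ} (h : IsPrimitiveRoot ζ n) (hn : Even n) (hn0 : n ≠ 0) :
    ζ ^ ((n : ℤ) / 2) = -1 := by
  obtain ⟨c, rfl⟩ := hn
  have hc : c ≠ 0 := by omega
  have h2 : IsPrimitiveRoot (ζ ^ c) 2 := by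
    simpa [← two_mul, hc] using h.pow_of_dvd hc ⟨2, by ring⟩
  have : (c + c : ℤ) / 2 = c := by omega
  push_cast
  rw [this, zpow_natCast]
  exact Units.ext (by simpa using (IsPrimitiveRoot.coe_units_iff.mpr h2).eq_neg_one_of_two_right)

theorem Int.not_dvd_two_mul_of_not_dvd_add_half {n l : ℤ} (hn : Even n) (h : ¬ n ∣ l)
    (h' : ¬ n ∣ l + n / 2) : ¬ n ∣ 2 * l := by
  obtain ⟨c, rfl⟩ := hn
  rw [show (c + c) / 2 = c by omega] at h'
  rintro ⟨t, ht⟩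
  rcases Int.even_or_odd t with ⟨s, rfl⟩ | ⟨s, rfl⟩
  · exact h ⟨s, by linarith⟩
  · exact h' ⟨s + 1, by linarith⟩

theorem Aff.zpow_mul_zpow_eq_iff_modEq {n : ℕ} (hn : Even n) (hn0 : n ≠ 0) {ε : ℂˣ}
    (hε : IsPrimitiveRoot ε n) {l₁ l₂ k₁ k₂ : ℤ} (h₁ : ¬ (n : ℤ) ∣ l₁) (h₃ : ¬ (n : ℤ) ∣ k₁) :
    (⟨ε, (ε : ℂ) - 1⟩ : Aff) ^ l₁ * (⟨ε, 0⟩ : Aff) ^ l₂ =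
        (⟨ε, 0⟩ : Aff) ^ k₁ * (⟨ε, (ε : ℂ) - 1⟩ : Aff) ^ k₂ ↔
      l₁ + l₂ ≡ k₁ + k₂ [ZMOD n] ∧ k₁ ≡ l₁ + n / 2 [ZMOD n] ∧ k₂ ≡ -l₁ [ZMOD n] := by
  have hnorm (a : ℤ) : ‖((ε ^ a : ℂˣ) : ℂ)‖ = 1 := by
    simp [(IsPrimitiveRoot.coe_units_iff.mpr hε).norm'_eq_one hn0]
  have hne_one {a : ℤ} (ha : ¬ (n : ℤ) ∣ a) : ((ε ^ a : ℂˣ) : ℂ) ≠ 1 := fun h =>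
    ha ((hε.zpow_eq_one_iff_dvd a).mp (Units.ext h))
  have hneg : -ε ^ l₁ = ε ^ (l₁ + n / 2) := by
    rw [zpow_add, hε.zpow_div_two_eq_neg_one hn hn0, mul_neg_one]
  rw [mk_sub_one_zpow, mk_sub_one_zpow, mk_zero_zpow, mk_zero_zpow, Aff.ext_iff]
  simp only [mul_a, mul_b, mul_zero, zero_add, add_zero]
  rw [Complex.sub_one_eq_mul_sub_one_iff (hnorm _) (hnorm _) (hnorm _) (hne_one h₁) (hne_one h₃),
    ← Units.val_neg, ← Units.val_inv_eq_inv_val, Units.val_inj, Units.val_inj, hneg, ← zpow_neg,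
    ← zpow_add, ← zpow_add]
  simp only [hε.zpow_eq_zpow_iff_modEq]

theorem stmt_15_general (n : ℕ) (hne : Even n) (hn : 4 ≤ n) (ε : ℂˣ)
    (hε : IsPrimitiveRoot ε n)
    (hp hq : Aff) (hhp : hp = ⟨ε, 0⟩) (hhq : hq = ⟨ε, (ε : ℂ) - 1⟩)
    (l₁ l₂ k₁ k₂ : ℤ)
    (h₁ : ¬ (n : ℤ) ∣ l₁)
    (h₃ : ¬ (n : ℤ) ∣ k₁) :
    hq ^ l₁ * hp ^ l₂ = hp ^ k₁ * hq ^ k₂ ↔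
      ∃ l : ℤ, ¬ (n : ℤ) ∣ 2 * l ∧
        l₁ ≡ l [ZMOD (n : ℤ)] ∧ l₂ ≡ -l + (n : ℤ) / 2 [ZMOD (n : ℤ)] ∧
        k₁ ≡ l + (n : ℤ) / 2 [ZMOD (n : ℤ)] ∧ k₂ ≡ -l [ZMOD (n : ℤ)] := by
  subst hhp hhq
  rw [Aff.zpow_mul_zpow_eq_iff_modEq hne (by omega) hε h₁ h₃]
  constructor
  · rintro ⟨hsum, hk₁, hk₂⟩
    have hk₁' : ¬ (n : ℤ) ∣ l₁ + n / 2 := fun hd =>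
      h₃ (Int.modEq_zero_iff_dvd.mp (hk₁.trans (Int.modEq_zero_iff_dvd.mpr hd)))
    refine ⟨l₁, Int.not_dvd_two_mul_of_not_dvd_add_half hne.natCast h₁ hk₁', rfl, ?_, hk₁, hk₂⟩
    refine Int.ModEq.add_left_cancel' l₁ ?_
    calc l₁ + l₂ ≡ k₁ + k₂ [ZMOD n] := hsum
      _ ≡ l₁ + n / 2 + -l₁ [ZMOD n] := hk₁.add hk₂
      _ = l₁ + (-l₁ + n / 2) := by ring
  · rintro ⟨l, -, e₁, e₂, e₃, e₄⟩
    refine ⟨?_, e₃.trans (e₁.symm.add_right _), e₄.trans e₁.symm.neg⟩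
    calc l₁ + l₂ ≡ l + (-l + n / 2) [ZMOD n] := e₁.add e₂
      _ = l + n / 2 + -l := by ring
      _ ≡ k₁ + k₂ [ZMOD n] := (e₃.add e₄).symm

theorem stmt_15 (n : ℕ) (hne : Even n) (hn : 4 ≤ n) (ε : ℂˣ)
    (hε : IsPrimitiveRoot ε n)
    (hp hq : Aff) (hhp : hp = ⟨ε, 0⟩) (hhq : hq = ⟨ε, (ε : ℂ) - 1⟩)
    (l₁ l₂ k₁ k₂ : ℤ)
    (h₁ : ¬ (n : ℤ) ∣ l₁) (h₂ : ¬ (n : ℤ) ∣ l₂)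
    (h₃ : ¬ (n : ℤ) ∣ k₁) (h₄ : ¬ (n : ℤ) ∣ k₂) :
    hq ^ l₁ * hp ^ l₂ = hp ^ k₁ * hq ^ k₂ ↔
      ∃ l : ℤ, ¬ (n : ℤ) ∣ 2 * l ∧
        l₁ ≡ l [ZMOD (n : ℤ)] ∧ l₂ ≡ -l + (n : ℤ) / 2 [ZMOD (n : ℤ)] ∧
        k₁ ≡ l + (n : ℤ) / 2 [ZMOD (n : ℤ)] ∧ k₂ ≡ -l [ZMOD (n : ℤ)] :=
  stmt_15_general n hne hn ε hε hp hq hhp hhq l₁ l₂ k₁ k₂ h₁ h₃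
end
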